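/- Positively represented measurements preserve positivity of the Wigner representation (core of the no-distillation theorem): let m ≥ 1, let composite phase point operators on m qudits be B_𝐯 for 𝐯 ∈ (Fin m → ZMod d × ZMod d), defined entrywise by (B_𝐯) x y = ∏_i A_(𝐯 i) (x i) (y i) for x, y : Fin m → ZMod d. Let σ : Matrix ((ZMod d) × (Fin m → ZMod d)) ((ZMod d) × (Fin m → ZMod d)) ℂ be Hermitian with Re(trace((A_u ⊗ B_𝐯) * σ)) ≥ 0 for all u and 𝐯, where ⊗ is the Kronecker product. Let P : Matrix (Fin m → ZMod d) (Fin m → ZMod d) ℂ be Hermitian with Re(trace(B_𝐯 * P)) ≥ 0 for all 𝐯. Then for every u ∈ ZMod d × ZMod d, Re(trace((A_u ⊗ P) * σ)) ≥ 0. -/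

import Mathlib

open Matrix Complex

/-- ω = exp(2πi/d). -/
noncomputable def omegaC (d : ℕ) : ℂ := Complex.exp (2 * Real.pi * Complex.I / d)

/-- The clock matrix `Z`, with `Z x x = ω ^ x.val`. -/
noncomputable def Zmat (d : ℕ) : Matrix (ZMod d) (ZMod d) ℂ :=
  Matrix.diagonal (fun x => omegaC d ^ x.val)

/-- The shift matrix `X`, with `X x y = 1` iff `x = y + 1`. -/
noncomputable def Xmat (d : ℕ) : Matrix (ZMod d) (ZMod d) ℂ :=
  Matrix.of fun x y => if x = y + 1 then 1 else 0

/-- The Heisenberg–Weyl operator `T_a`. -/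
noncomputable def TW (d : ℕ) [NeZero d] (a : ZMod d × ZMod d) : Matrix (ZMod d) (ZMod d) ℂ :=
  omegaC d ^ ((-((2 : ZMod d)⁻¹ * a.1 * a.2)).val) • (Zmat d ^ a.1.val * Xmat d ^ a.2.val)

/-- The phase point operator at the origin, `A_0 = (1/d) • ∑ a, T_a`. -/
noncomputable def Apoint0 (d : ℕ) [NeZero d] : Matrix (ZMod d) (ZMod d) ℂ :=
  (1 / (d : ℂ)) • ∑ a : ZMod d × ZMod d, TW d a

/-- The phase point operator `A_u = T_u * A_0 * T_uᴴ`. -/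
noncomputable def Apoint (d : ℕ) [NeZero d] (u : ZMod d × ZMod d) : Matrix (ZMod d) (ZMod d) ℂ :=
  TW d u * Apoint0 d * (TW d u)ᴴ

open Kronecker

/-- Composite phase point operator on `m` qudits. -/
noncomputable def Bcomp (d : ℕ) [NeZero d] (m : ℕ) (v : Fin m → ZMod d × ZMod d) :
    Matrix (Fin m → ZMod d) (Fin m → ZMod d) ℂ :=
  Matrix.of fun x y => ∏ i : Fin m, Apoint d (v i) (x i) (y i)

/-!
The phase point operators satisfy the completeness relation
`∑ u, A_u j k * A_u p q = d * [j = q ∧ k = p]`, i.e. `∑ u, A_u ⊗ A_u = d • SWAP`.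
It follows from orthogonality of the characters of `ZMod d` once
`A_u j k = [j + k = 2 u₂] ω^(u₁ (j - k))` is computed, which needs `2` to be invertible. The relation passes to tensor products, so the
`B_v` satisfy it with constant `d ^ m`, and then every matrix expands as
`d ^ m • P = ∑ v, tr (B_v P) • B_v`. For Hermitian `P` the coefficients are real, and by
linearity of `Q ↦ tr ((A_u ⊗ Q) σ)` we get
`d ^ m tr ((A_u ⊗ P) σ) = ∑ v, tr (B_v P) tr ((A_u ⊗ B_v) σ)`, a sum of products of
nonnegative reals.
-/

open Finset

namespace Matrix

variable {ι κ l n R : Type*} [CommSemiring R]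

lemma mul_mul_conjTranspose_apply_of_monomial {G : Type*} [AddGroup G] [Fintype G]
    [DecidableEq G] [StarRing R] {T : Matrix G G R} (f : G → R) (s : G)
    (hT : ∀ j k, T j k = if j = k + s then f j else 0) (M : Matrix G G R) (j k : G) :
    (T * M * Tᴴ) j k = f j * M (j - s) (k - s) * star (f k) := by
  have hT' : ∀ j k, T j k = if k = j - s then f j else 0 := fun j k =>
    (hT j k).trans (if_congr (eq_sub_iff_add_eq.trans eq_comm).symm rfl rfl)
  have hTH : ∀ j k, Tᴴ j k = if j = k - s then star (f k) else 0 := fun j k => by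
    rw [conjTranspose_apply, hT', apply_ite star, star_zero]
  simp only [mul_apply, hT', hTH, ite_mul, mul_ite, zero_mul, mul_zero, sum_ite_eq', mem_univ,
    if_true]

lemma sum_prod_mul_prod_eq_ite [Fintype κ] [DecidableEq n] [Fintype ι] [DecidableEq ι]
    (A : κ → Matrix n n R) (c : R)
    (hA : ∀ j k p q, ∑ u, A u j k * A u p q = if j = q ∧ k = p then c else 0)
    (x y p q : ι → n) :
    ∑ v : ι → κ, (∏ i, A (v i) (x i) (y i)) * ∏ i, A (v i) (p i) (q i) =
      if x = q ∧ y = p then c ^ Fintype.card ι else 0 := by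
  simp only [← prod_mul_distrib]
  rw [← Fintype.prod_sum fun i u => A u (x i) (y i) * A u (p i) (q i)]
  simp only [hA, Fintype.prod_ite_zero, prod_const, card_univ]
  exact if_congr (by simp only [funext_iff, forall_and]) rfl rfl

lemma sum_trace_mul_smul_eq_smul [Fintype n] [DecidableEq n] [Fintype ι]
    (B : ι → Matrix n n R) (c : R)
    (hB : ∀ a b x y, ∑ i, B i a b * B i x y = if a = y ∧ b = x then c else 0)
    (P : Matrix n n R) :
    ∑ i, trace (B i * P) • B i = c • P := by
  ext x y
  calc (∑ i, trace (B i * P) • B i) x y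
      = ∑ a, ∑ b, P b a * ∑ i, B i a b * B i x y := by
        simp only [Matrix.sum_apply, Matrix.smul_apply, trace, Matrix.diag, mul_apply, smul_eq_mul,
          sum_mul, mul_sum]
        rw [sum_comm]
        refine sum_congr rfl fun a _ => ?_
        rw [sum_comm]
        exact sum_congr rfl fun b _ => sum_congr rfl fun i _ => by ring
    _ = (c • P) x y := by
        simp only [hB, ite_and, mul_ite, mul_zero, sum_ite_eq, mem_univ, if_true,
          Matrix.smul_apply, smul_eq_mul, mul_comm]

lemma IsHermitian.star_trace_mul [Fintype n] [StarRing R] {A B : Matrix n n R}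
    (hA : A.IsHermitian) (hB : B.IsHermitian) : star (trace (A * B)) = trace (A * B) := by
  rw [← trace_conjTranspose, conjTranspose_mul, hA.eq, hB.eq, trace_mul_comm]

lemma trace_kronecker_sum_smul_mul [Fintype n] [Fintype ι] [Fintype l] (A : Matrix l l R)
    (r : ι → R) (B : ι → Matrix n n R) (σ : Matrix (l × n) (l × n) R) :
    trace ((A ⊗ₖ ∑ i, r i • B i) * σ) = ∑ i, r i * trace ((A ⊗ₖ B i) * σ) := by
  have : A ⊗ₖ ∑ i, r i • B i = ∑ i, r i • A ⊗ₖ B i :=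
    map_sum (kroneckerBilinear (R := R) A) (fun i => r i • B i) univ |>.trans
      (sum_congr rfl fun i _ => map_smul (kroneckerBilinear (R := R) A) (r i) (B i))
  simp only [this, sum_mul, smul_mul, trace_sum, trace_smul, smul_eq_mul]

end Matrix

section PhasePoint

variable {d : ℕ}

lemma Xmat_apply (j k : ZMod d) : Xmat d j k = if j = k + 1 then 1 else 0 := rfl

lemma two_mul_inv_two (hodd : Odd d) : (2 : ZMod d) * 2⁻¹ = 1 :=
  ZMod.mul_inv_of_unit 2 <| by
    simpa using (ZMod.isUnit_iff_coprime 2 d).mpr (Nat.coprime_two_left.mpr hodd)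

variable [NeZero d]

local notation "𝕖" => ZMod.stdAddChar

lemma star_stdAddChar (x : ZMod d) : star (𝕖 x) = 𝕖 (-x) :=
  (AddChar.map_neg_eq_conj _ x).symm

lemma omegaC_pow_val (x : ZMod d) : omegaC d ^ x.val = 𝕖 x := by
  rw [ZMod.stdAddChar_apply, ZMod.toCircle_apply, omegaC, ← Complex.exp_nat_mul]
  ring_nf

lemma Zmat_pow (n : ℕ) : Zmat d ^ n = diagonal fun x => 𝕖 ((n : ZMod d) * x) := by
  simp only [Zmat, diagonal_pow, omegaC_pow_val]
  congr 1
  ext x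
  simp [← AddChar.map_nsmul_eq_pow, nsmul_eq_mul]

lemma Xmat_pow_apply (n : ℕ) (j k : ZMod d) :
    (Xmat d ^ n) j k = if j = k + n then 1 else 0 := by
  induction n generalizing k with
  | zero => simp [one_apply]
  | succ n ih =>
    simp only [pow_succ, mul_apply, Xmat_apply, mul_ite, mul_one, mul_zero, sum_ite_eq', mem_univ,
      if_true, ih]
    push_cast
    rw [add_assoc, add_comm 1]

lemma TW_apply (a : ZMod d × ZMod d) (j k : ZMod d) :
    TW d a j k = if j = k + a.2 then 𝕖 (a.1 * j - 2⁻¹ * a.1 * a.2) else 0 := by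
  simp only [TW, Matrix.smul_apply, Zmat_pow, diagonal_mul, Xmat_pow_apply, ZMod.natCast_zmod_val,
    omegaC_pow_val, smul_eq_mul]
  split_ifs <;> simp [sub_eq_add_neg, AddChar.map_add_eq_mul, mul_comm]

lemma Apoint0_apply (hodd : Odd d) (j k : ZMod d) :
    Apoint0 d j k = if j + k = 0 then 1 else 0 := by
  have h2 := two_mul_inv_two hodd
  have hterm : ∀ a : ZMod d × ZMod d, TW d a j k =
      if a.2 = j - k then 𝕖 (a.1 * (2⁻¹ * (j + k))) else 0 := fun a => by
    rw [TW_apply, if_congr (eq_sub_iff_add_eq'.trans eq_comm).symm rfl rfl]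
    split_ifs with h
    · congr 1; rw [h]; linear_combination -(a.1 * j) * h2
    · rfl
  have hzero : 2⁻¹ * (j + k) = 0 ↔ j + k = 0 :=
    ⟨fun h => by linear_combination 2 * h - (j + k) * h2, fun h => by rw [h, mul_zero]⟩
  simp only [Apoint0, Matrix.smul_apply, Matrix.sum_apply, hterm, Fintype.sum_prod_type,
    sum_ite_eq', mem_univ, if_true, AddChar.sum_mulShift _ (ZMod.isPrimitive_stdAddChar d), hzero]
  split_ifs <;> simp [ZMod.card]

lemma Apoint_apply (hodd : Odd d) (u : ZMod d × ZMod d) (j k : ZMod d) :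
    Apoint d u j k = if j + k = 2 * u.2 then 𝕖 (u.1 * (j - k)) else 0 := by
  rw [Apoint, mul_mul_conjTranspose_apply_of_monomial _ u.2 (TW_apply u), Apoint0_apply hodd,
    star_stdAddChar, mul_ite, ite_mul, mul_one, mul_zero, zero_mul, ← AddChar.map_add_eq_mul]
  refine if_congr ⟨fun h => by linear_combination h, fun h => by linear_combination h⟩ ?_ rfl
  congr 1
  ring

lemma Apoint_isHermitian (hodd : Odd d) (u : ZMod d × ZMod d) : (Apoint d u).IsHermitian := by
  ext j k
  rw [conjTranspose_apply, Apoint_apply hodd, Apoint_apply hodd, apply_ite star, star_zero,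
    star_stdAddChar]
  refine if_congr ⟨fun h => by linear_combination h, fun h => by linear_combination h⟩ ?_ rfl
  congr 1
  ring

lemma sum_Apoint_mul_Apoint (hodd : Odd d) (j k p q : ZMod d) :
    ∑ u, Apoint d u j k * Apoint d u p q = if j = q ∧ k = p then (d : ℂ) else 0 := by
  have h2 := two_mul_inv_two hodd
  have hterm : ∀ u : ZMod d × ZMod d, Apoint d u j k * Apoint d u p q =
      if u.2 = 2⁻¹ * (j + k) ∧ p + q = j + k then 𝕖 (u.1 * (j - k + (p - q))) else 0 := by
    intro u
    rw [Apoint_apply hodd, Apoint_apply hodd, ite_zero_mul_ite_zero, ← AddChar.map_add_eq_mul,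
      ← mul_add]
    refine if_congr ⟨fun ⟨h, h'⟩ => ⟨?_, ?_⟩, fun ⟨h, h'⟩ => ⟨?_, ?_⟩⟩ rfl rfl
    · linear_combination -2⁻¹ * h - u.2 * h2
    · rw [h, h']
    · linear_combination -2 * h - (j + k) * h2
    · linear_combination h' - 2 * h - (j + k) * h2
  have hdiag : p + q = j + k ∧ j - k + (p - q) = 0 ↔ j = q ∧ k = p :=
    ⟨fun ⟨h, h'⟩ => ⟨by linear_combination 2⁻¹ * (h' - h) - (j - q) * h2,
      by linear_combination -2⁻¹ * (h + h') - (k - p) * h2⟩,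
      fun ⟨h, h'⟩ => ⟨by linear_combination -h - h', by linear_combination h - h'⟩⟩
  rw [← if_congr hdiag rfl rfl]
  simp only [hterm, Fintype.sum_prod_type, ite_and, sum_ite_eq', mem_univ, if_true]
  by_cases h : p + q = j + k
  · simp only [h, if_true, AddChar.sum_mulShift _ (ZMod.isPrimitive_stdAddChar d), ZMod.card,
      Nat.cast_ite, Nat.cast_zero]
  · simp only [h, if_false, sum_const_zero]

lemma Bcomp_isHermitian (hodd : Odd d) (m : ℕ) (v : Fin m → ZMod d × ZMod d) :
    (Bcomp d m v).IsHermitian := by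
  ext x y
  simp only [Bcomp, conjTranspose_apply, of_apply, star_prod, (Apoint_isHermitian hodd _).apply]

lemma sum_Bcomp_mul_Bcomp (hodd : Odd d) (m : ℕ) (x y p q : Fin m → ZMod d) :
    ∑ v, Bcomp d m v x y * Bcomp d m v p q = if x = q ∧ y = p then (d : ℂ) ^ m else 0 := by
  simpa only [Bcomp, of_apply, Fintype.card_fin] using
    sum_prod_mul_prod_eq_ite _ _ (sum_Apoint_mul_Apoint hodd) x y p q

end PhasePoint

theorem positive_measurement_preserves_positivity_general (d : ℕ) [NeZero d]
    (hodd : Odd d) (m : ℕ)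
    (σ : Matrix (ZMod d × (Fin m → ZMod d)) (ZMod d × (Fin m → ZMod d)) ℂ)
    (hσpos : ∀ (u : ZMod d × ZMod d) (v : Fin m → ZMod d × ZMod d),
        0 ≤ (((Apoint d u ⊗ₖ Bcomp d m v) * σ).trace).re)
    (P : Matrix (Fin m → ZMod d) (Fin m → ZMod d) ℂ) (hPH : Pᴴ = P)
    (hPpos : ∀ v : Fin m → ZMod d × ZMod d, 0 ≤ ((Bcomp d m v * P).trace).re)
    (u : ZMod d × ZMod d) :
    0 ≤ (((Apoint d u ⊗ₖ P) * σ).trace).re := by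
  have hreal : ∀ v, ((Bcomp d m v * P).trace.re : ℂ) = (Bcomp d m v * P).trace := fun v =>
    Complex.conj_eq_iff_re.mp ((Bcomp_isHermitian hodd m v).star_trace_mul hPH)
  have hexpand : ((d : ℝ) ^ m : ℝ) * ((Apoint d u ⊗ₖ P) * σ).trace =
      ∑ v, ((Bcomp d m v * P).trace.re : ℂ) * ((Apoint d u ⊗ₖ Bcomp d m v) * σ).trace := by
    rw [← trace_kronecker_sum_smul_mul, sum_congr rfl fun v _ => by rw [hreal v],
      sum_trace_mul_smul_eq_smul _ _ (sum_Bcomp_mul_Bcomp hodd m), kronecker_smul, smul_mul,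
      trace_smul, smul_eq_mul, Complex.ofReal_pow, Complex.ofReal_natCast]
  have hre := congrArg Complex.re hexpand
  simp only [Complex.re_ofReal_mul, Complex.re_sum] at hre
  refine (mul_nonneg_iff_of_pos_left (pow_pos (Nat.cast_pos.mpr (NeZero.pos d)) m)).mp ?_
  rw [hre]
  exact sum_nonneg fun v _ => mul_nonneg (hPpos v) (hσpos u v)

/-- Positively represented measurements preserve positivity of the Wigner representation. -/
theorem positive_measurement_preserves_positivity (d : ℕ) [NeZero d]
    (hodd : Odd d) (hd : 1 < d) (m : ℕ) (hm : 1 ≤ m)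
    (σ : Matrix (ZMod d × (Fin m → ZMod d)) (ZMod d × (Fin m → ZMod d)) ℂ)
    (hσH : σᴴ = σ)
    (hσpos : ∀ (u : ZMod d × ZMod d) (v : Fin m → ZMod d × ZMod d),
        0 ≤ (((Apoint d u ⊗ₖ Bcomp d m v) * σ).trace).re)
    (P : Matrix (Fin m → ZMod d) (Fin m → ZMod d) ℂ) (hPH : Pᴴ = P)
    (hPpos : ∀ v : Fin m → ZMod d × ZMod d, 0 ≤ ((Bcomp d m v * P).trace).re)
    (u : ZMod d × ZMod d) :
    0 ≤ (((Apoint d u ⊗ₖ P) * σ).trace).re :=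
  positive_measurement_preserves_positivity_general d hodd m σ hσpos P hPH hPpos u
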